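/- arXiv:2602.04862 — 3 statements merged into one kernel-verified Lean document; each statement's English description precedes it below -/
import Mathlib

section
/- Let N ≥ 1 and let F, G ∈ ℂ^{N×N} be arbitrary complex matrices. Then there exists a semi-unitary matrix V ∈ ℂ^{N×(N−1)} (i.e., V^H V = I_{N−1}) such that the N × 2(N−1) block matrix [F V, G V] obtained by concatenating the columns of F V and G V has rank at most N − 1. -/
open Matrix

lemma aligned_exists (N : ℕ) (hN : 1 ≤ N) (F G : Matrix (Fin N) (Fin N) ℂ) :
    ∃ w : Fin N → ℂ, w ≠ 0 ∧ ∃ x : Fin N → ℂ, x ≠ 0 ∧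
      (∃ c : ℂ, Fᴴ *ᵥ w = c • x) ∧ (∃ d : ℂ, Gᴴ *ᵥ w = d • x) := by
  haveI : Nonempty (Fin N) := ⟨⟨0, hN⟩⟩
  have hone : (fun _ : Fin N => (1 : ℂ)) ≠ 0 := by
    intro h
    have := congrFun h (Classical.arbitrary (Fin N))
    simp at this
  by_cases hdet : (Gᴴ).det = 0
  · obtain ⟨w, hw0, hw⟩ := Matrix.exists_mulVec_eq_zero_iff.mpr hdet
    refine ⟨w, hw0, ?_⟩
    by_cases ha : Fᴴ *ᵥ w = 0
    · exact ⟨fun _ => 1, hone, ⟨0, by simp [ha]⟩, ⟨0, by simp [hw]⟩⟩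
    · exact ⟨Fᴴ *ᵥ w, ha, ⟨1, by simp⟩, ⟨0, by simp [hw]⟩⟩
  · have hGu : IsUnit (Gᴴ).det := isUnit_iff_ne_zero.mpr hdet
    let f : Module.End ℂ (Fin N → ℂ) := ((Gᴴ)⁻¹ * Fᴴ).mulVecLin
    obtain ⟨μ, hμ⟩ := Module.End.exists_eigenvalue f
    obtain ⟨w, hw⟩ := hμ.exists_hasEigenvector
    have hw0 : w ≠ 0 := hw.right
    have heig : ((Gᴴ)⁻¹ * Fᴴ) *ᵥ w = μ • w := hw.apply_eq_smul
    have ha : Fᴴ *ᵥ w = μ • (Gᴴ *ᵥ w) := by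
      have : Gᴴ *ᵥ (((Gᴴ)⁻¹ * Fᴴ) *ᵥ w) = Gᴴ *ᵥ (μ • w) := by rw [heig]
      rw [Matrix.mulVec_mulVec, ← Matrix.mul_assoc, Matrix.mul_nonsing_inv _ hGu,
        Matrix.one_mul, Matrix.mulVec_smul] at this
      exact this
    have hb0 : Gᴴ *ᵥ w ≠ 0 := by
      intro h
      exact hdet (Matrix.exists_mulVec_eq_zero_iff.mp ⟨w, hw0, h⟩) |>.elim
    exact ⟨w, hw0, Gᴴ *ᵥ w, hb0, ⟨μ, ha⟩, ⟨1, by simp⟩⟩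

/-- Subspace-alignment lemma: for any `F, G : ℂ^{N×N}` there is a semi-unitary
`V : ℂ^{N×(N-1)}` (i.e. `Vᴴ V = I`) such that the block matrix `[F V, G V]`
has rank at most `N - 1`. -/
theorem stmt_0 (N : ℕ) (hN : 1 ≤ N) (F G : Matrix (Fin N) (Fin N) ℂ) :
    ∃ V : Matrix (Fin N) (Fin (N - 1)) ℂ,
      Vᴴ * V = 1 ∧ (Matrix.fromCols (F * V) (G * V)).rank ≤ N - 1 := by
  obtain ⟨w, hw0, x, hx0, ⟨c, hc⟩, ⟨d, hd⟩⟩ := aligned_exists N hN F G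
  let xE : EuclideanSpace ℂ (Fin N) := WithLp.toLp 2 x
  have hxE0 : xE ≠ 0 := fun h => hx0 (by simpa [xE] using congrArg WithLp.ofLp h)
  let L : Submodule ℂ (EuclideanSpace ℂ (Fin N)) := ℂ ∙ xE
  have hSrank : Module.finrank ℂ Lᗮ = N - 1 := by
    have h1 : Module.finrank ℂ L = 1 := finrank_span_singleton hxE0
    have h2 := Submodule.finrank_add_finrank_orthogonal L
    rw [h1, finrank_euclideanSpace_fin] at h2
    omega
  let ob : OrthonormalBasis (Fin (N - 1)) ℂ Lᗮ :=
    (stdOrthonormalBasis ℂ Lᗮ).reindex (finCongr hSrank)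
  let V : Matrix (Fin N) (Fin (N - 1)) ℂ := fun i j => ((ob j : EuclideanSpace ℂ (Fin N)) i)
  -- orthogonality of columns of V against x
  have hxV : ∀ j, ∑ i, (starRingEnd ℂ) (x i) * V i j = 0 := by
    intro j
    have hmem : (ob j : EuclideanSpace ℂ (Fin N)) ∈ Lᗮ := (ob j).2
    have : (inner ℂ xE ((ob j : EuclideanSpace ℂ (Fin N))) : ℂ) = 0 :=
      Submodule.inner_right_of_mem_orthogonal (Submodule.mem_span_singleton_self xE) hmem
    simpa [PiLp.inner_apply, RCLike.inner_apply, V, xE, mul_comm] using this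
  refine ⟨V, ?_, ?_⟩
  · -- semi-unitary
    ext j k
    have horth := (orthonormal_iff_ite (𝕜 := ℂ)).mp ob.orthonormal j k
    rw [Submodule.coe_inner] at horth
    simp only [PiLp.inner_apply, RCLike.inner_apply] at horth
    simp only [Matrix.mul_apply, Matrix.conjTranspose_apply, Matrix.one_apply, V]
    show ∑ i, star (V i j) * V i k = _
    rw [← horth]
    refine Finset.sum_congr rfl fun i _ => ?_
    simp only [V, starRingEnd_apply]
    ring
  · -- rank bound
    set M := Matrix.fromCols (F * V) (G * V) with hM
    -- left null vector
    have hleft : star w ᵥ* M = 0 := by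
      have key : ∀ (A : Matrix (Fin N) (Fin N) ℂ) (e : ℂ), Aᴴ *ᵥ w = e • x →
          star w ᵥ* (A * V) = 0 := by
        intro A e hA
        have h1 : star w ᵥ* A = (starRingEnd ℂ) e • star x := by
          have := Matrix.star_mulVec (Aᴴ) w
          rw [Matrix.conjTranspose_conjTranspose] at this
          rw [← this, hA, star_smul]
          rfl
        have h2 : star w ᵥ* (A * V) = (star w ᵥ* A) ᵥ* V := (Matrix.vecMul_vecMul _ _ _).symm
        have expand : ∀ j, ((((starRingEnd ℂ) e) • star x) ᵥ* V) j
            = (starRingEnd ℂ) e * ∑ i, (starRingEnd ℂ) (x i) * V i j := by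
          intro j
          simp only [Matrix.vecMul, dotProduct, Pi.smul_apply, Pi.star_apply,
            smul_eq_mul, starRingEnd_apply, Finset.mul_sum, mul_assoc]
        funext j
        simp only [Pi.zero_apply]
        rw [h2, h1, expand j, hxV j, mul_zero]
      rw [hM, Matrix.vecMul_fromCols, key F c hc, key G d hd]
      funext j
      cases j <;> rfl
    -- functional with kernel of dimension N-1
    let f : (Fin N → ℂ) →ₗ[ℂ] ℂ :=
      { toFun := fun y => star w ⬝ᵥ y
        map_add' := fun y z => by simp [dotProduct_add]
        map_smul' := fun a y => by simp [dotProduct_smul] }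
    have hfw : f w ≠ 0 := by
      intro h
      apply hw0
      have hsum : ∑ i, ((Complex.normSq (w i) : ℝ) : ℂ) = 0 := by
        have : ∑ i, (starRingEnd ℂ) (w i) * w i = 0 := h
        rw [← this]
        exact Finset.sum_congr rfl fun i _ => by
          rw [← Complex.mul_conj (w i)]; ring
      have hsumR : ∑ i, Complex.normSq (w i) = 0 := by
        have := congrArg Complex.re hsum
        simpa [Complex.re_sum] using this
      funext i
      have : Complex.normSq (w i) = 0 :=
        (Finset.sum_eq_zero_iff_of_nonneg (fun i _ => Complex.normSq_nonneg (w i))).mp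
          hsumR i (Finset.mem_univ i)
      simpa using Complex.normSq_eq_zero.mp this
    have hrange : LinearMap.range M.mulVecLin ≤ LinearMap.ker f := by
      rintro y ⟨u, rfl⟩
      show star w ⬝ᵥ (M *ᵥ u) = 0
      rw [Matrix.dotProduct_mulVec, hleft, zero_dotProduct]
    have hker : Module.finrank ℂ (LinearMap.ker f) = N - 1 := by
      have h1 := LinearMap.finrank_range_add_finrank_ker f
      rw [Module.finrank_fin_fun] at h1
      have hr1 : Module.finrank ℂ (LinearMap.range f) = 1 := by
        have hle : Module.finrank ℂ (LinearMap.range f) ≤ 1 := by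
          simpa using Submodule.finrank_le (LinearMap.range f)
        have hne : LinearMap.range f ≠ ⊥ := by
          intro h
          exact hfw (by simpa [h] using LinearMap.mem_range_self f w)
        have h0 : Module.finrank ℂ (LinearMap.range f) ≠ 0 := by
          intro h
          exact hne (Submodule.finrank_eq_zero.mp h)
        omega
      omega
    calc M.rank = Module.finrank ℂ (LinearMap.range M.mulVecLin) := rfl
      _ ≤ Module.finrank ℂ (LinearMap.ker f) := Submodule.finrank_mono hrange
      _ = N - 1 := hker
end

section
/- Let N ≥ 1 and let F, G ∈ ℂ^{N×N} be arbitrary complex matrices. Then there exist a nonzero vector w ∈ ℂ^N and a semi-unitary matrix V ∈ ℂ^{N×(N−1)} (i.e., V^H V = I_{N−1}) such that w^H F V = 0 and w^H G V = 0 (as 1×(N−1) row vectors). -/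
open Matrix

lemma step1 (N : ℕ) (hN : 1 ≤ N) (A B : Matrix (Fin N) (Fin N) ℂ) :
    ∃ u : Fin N → ℂ, u ≠ 0 ∧ ∃ x : Fin N → ℂ,
      A *ᵥ u ∈ Submodule.span ℂ {x} ∧ B *ᵥ u ∈ Submodule.span ℂ {x} := by
  haveI : Nonempty (Fin N) := ⟨⟨0, hN⟩⟩
  by_cases hA : A.det = 0
  · obtain ⟨u, hu, hAu⟩ := (Matrix.exists_mulVec_eq_zero_iff).mpr hA
    exact ⟨u, hu, B *ᵥ u, by simp [hAu], Submodule.mem_span_singleton_self _⟩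
  · set f : Module.End ℂ (Fin N → ℂ) := Matrix.mulVecLin (B * A⁻¹) with hf
    obtain ⟨c, hc⟩ := Module.End.exists_eigenvalue f
    obtain ⟨v, hv⟩ := hc.exists_hasEigenvector
    have hv0 : v ≠ 0 := hv.right
    have hfv : (B * A⁻¹) *ᵥ v = c • v := hv.apply_eq_smul
    have hAinv : A *ᵥ (A⁻¹ *ᵥ v) = v := by
      rw [Matrix.mulVec_mulVec, Matrix.mul_nonsing_inv _ (isUnit_iff_ne_zero.mpr hA),
        Matrix.one_mulVec]
    refine ⟨A⁻¹ *ᵥ v, ?_, v, ?_, ?_⟩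
    · intro h
      apply hv0
      rw [h, Matrix.mulVec_zero] at hAinv
      exact hAinv.symm
    · rw [hAinv]; exact Submodule.mem_span_singleton_self _
    · have : B *ᵥ (A⁻¹ *ᵥ v) = c • v := by rw [Matrix.mulVec_mulVec]; exact hfv
      rw [this]
      exact Submodule.smul_mem _ _ (Submodule.mem_span_singleton_self _)

/-- There exist a nonzero `w ∈ ℂ^N` and a semi-unitary `V : ℂ^{N×(N-1)}`
(`Vᴴ V = I`) such that `wᴴ F V = 0` and `wᴴ G V = 0` as row vectors. -/
theorem stmt_1 (N : ℕ) (hN : 1 ≤ N) (F G : Matrix (Fin N) (Fin N) ℂ) :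
    ∃ w : Fin N → ℂ, w ≠ 0 ∧
      ∃ V : Matrix (Fin N) (Fin (N - 1)) ℂ, Vᴴ * V = 1 ∧
        star w ᵥ* (F * V) = 0 ∧ star w ᵥ* (G * V) = 0 := by
  obtain ⟨u, hu, x, hxF, hxG⟩ := step1 N hN Fᴴ Gᴴ
  set S : Submodule ℂ (EuclideanSpace ℂ (Fin N)) := Submodule.span ℂ {WithLp.toLp 2 x} with hS
  have hdim : N - 1 ≤ Module.finrank ℂ Sᗮ := by
    have h1 : Module.finrank ℂ S ≤ 1 := by
      refine le_trans (finrank_span_le_card ({WithLp.toLp 2 x} : Set (EuclideanSpace ℂ (Fin N)))) ?_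
      simp
    have h2 : Module.finrank ℂ S + Module.finrank ℂ Sᗮ =
        Module.finrank ℂ (EuclideanSpace ℂ (Fin N)) :=
      Submodule.finrank_add_finrank_orthogonal S
    have h3 : Module.finrank ℂ (EuclideanSpace ℂ (Fin N)) = N := by
      simp [finrank_euclideanSpace]
    omega
  let b := stdOrthonormalBasis ℂ (↥Sᗮ)
  let e : Fin (N - 1) → EuclideanSpace ℂ (Fin N) := fun j => (b (Fin.castLE hdim j) : _)
  have he_mem : ∀ j, e j ∈ Sᗮ := fun j => (b (Fin.castLE hdim j)).2
  have he_inner : ∀ i j, (inner ℂ (e i) (e j) : ℂ) = if i = j then 1 else 0 := by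
    intro i j
    have horth := b.orthonormal
    rw [orthonormal_iff_ite] at horth
    have h := horth (Fin.castLE hdim i) (Fin.castLE hdim j)
    rw [Submodule.coe_inner] at *
    simp only [e]
    rw [h]
    congr 1
    simp [Fin.castLE, Fin.ext_iff]
  have key : ∀ (M : Matrix (Fin N) (Fin N) ℂ) (j : Fin (N - 1)),
      (star u ᵥ* (M * Matrix.of (fun i j => e j i))) j =
        (inner ℂ (show EuclideanSpace ℂ (Fin N) from WithLp.toLp 2 (Mᴴ *ᵥ u)) (e j) : ℂ) := by
    intro M j
    simp only [Matrix.vecMul, dotProduct, PiLp.toLp_apply, Matrix.mul_apply, Matrix.of_apply,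
      Pi.star_apply, PiLp.inner_apply, RCLike.inner_apply, Matrix.mulVec,
      Matrix.conjTranspose_apply, Finset.mul_sum, Finset.sum_mul]
    rw [Finset.sum_comm]
    apply Finset.sum_congr rfl; intro k _
    rw [map_sum, Finset.mul_sum]
    apply Finset.sum_congr rfl; intro i _
    simp only [star_mul', star_star, starRingEnd_apply]
    ring
  refine ⟨u, hu, Matrix.of (fun i j => e j i), ?_, ?_, ?_⟩
  · ext i j
    have h := he_inner i j
    rw [PiLp.inner_apply] at h
    rw [Matrix.mul_apply, Matrix.one_apply]
    rw [← h]
    apply Finset.sum_congr rfl; intro k _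
    simp only [Matrix.conjTranspose_apply, Matrix.of_apply, RCLike.inner_apply, starRingEnd_apply]
    ring
  · funext j
    rw [key F j]
    exact Submodule.inner_right_of_mem_orthogonal (by obtain ⟨c, hc⟩ := Submodule.mem_span_singleton.mp hxF; exact Submodule.mem_span_singleton.mpr ⟨c, by rw [← hc, WithLp.toLp_smul]⟩) (he_mem j)
  · funext j
    rw [key G j]
    exact Submodule.inner_right_of_mem_orthogonal (by obtain ⟨c, hc⟩ := Submodule.mem_span_singleton.mp hxG; exact Submodule.mem_span_singleton.mpr ⟨c, by rw [← hc, WithLp.toLp_smul]⟩) (he_mem j)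
end

section
/- Let N ≥ 1 and F, G ∈ ℂ^{N×N}, σ ≥ 0. On a probability space, let x : Ω → ℂ^N, s : Ω → ℂ, and z : Ω → ℂ^N be mutually independent square-integrable random objects with E[x] = 0, E[x x^H] = Q where Q is Hermitian positive definite, E[s] = 0, E[|s|²] = σ², E[z] = 0, and E[z z^H] = I_N. Define y := (F + s·G) x + z, let R_0 := I_N + σ² G Q G^H, and let A := Q F^H (F Q F^H + R_0)^{-1}. Then the LMMSE error covariance satisfies E[(x − A y)(x − A y)^H] = (Q^{-1} + F^H R_0^{-1} F)^{-1}. -/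
open Matrix MeasureTheory ProbabilityTheory ComplexOrder
open scoped ENNReal

section AuxLemmas

variable {Ω : Type*} [MeasureSpace Ω] [IsProbabilityMeasure (ℙ : Measure Ω)]

private lemma aux_mul_integrable {f g : Ω → ℂ} (hf : MemLp f 2 ℙ) (hg : MemLp g 2 ℙ) :
    Integrable (fun ω => f ω * g ω) ℙ := by
  have h : MemLp (f • g) 1 ℙ :=
    hg.smul hf
  exact memLp_one_iff_integrable.mp h

private lemma aux_conj_memℒp {f : Ω → ℂ} (hf : MemLp f 2 ℙ) :
    MemLp (fun ω => (starRingEnd ℂ) (f ω)) 2 ℙ := by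
  have h := (Complex.conjCLE.toContinuousLinearMap).comp_memLp' hf
  exact h

private lemma aux_indep_integral_mul {f g : Ω → ℂ} (h : IndepFun f g ℙ)
    (hf : Integrable f ℙ) (hg : Integrable g ℙ) :
    (∫ ω, f ω * g ω) = (∫ ω, f ω) * ∫ ω, g ω := by
  have hfg : Integrable (fun ω => f ω * g ω) ℙ := h.integrable_mul hf hg
  have hrr : IndepFun (fun ω => (f ω).re) (fun ω => (g ω).re) ℙ :=
    h.comp Complex.measurable_re Complex.measurable_re
  have hri : IndepFun (fun ω => (f ω).re) (fun ω => (g ω).im) ℙ :=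
    h.comp Complex.measurable_re Complex.measurable_im
  have hir : IndepFun (fun ω => (f ω).im) (fun ω => (g ω).re) ℙ :=
    h.comp Complex.measurable_im Complex.measurable_re
  have hii : IndepFun (fun ω => (f ω).im) (fun ω => (g ω).im) ℙ :=
    h.comp Complex.measurable_im Complex.measurable_im
  have ifr : Integrable (fun ω => (f ω).re) ℙ := hf.re
  have ifi : Integrable (fun ω => (f ω).im) ℙ := hf.im
  have igr : Integrable (fun ω => (g ω).re) ℙ := hg.re
  have igi : Integrable (fun ω => (g ω).im) ℙ := hg.im
  have m1 : (∫ ω, (f ω).re * (g ω).re) = (∫ ω, (f ω).re) * ∫ ω, (g ω).re :=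
    hrr.integral_fun_mul_eq_mul_integral ifr.aestronglyMeasurable igr.aestronglyMeasurable
  have m2 : (∫ ω, (f ω).im * (g ω).im) = (∫ ω, (f ω).im) * ∫ ω, (g ω).im :=
    hii.integral_fun_mul_eq_mul_integral ifi.aestronglyMeasurable igi.aestronglyMeasurable
  have m3 : (∫ ω, (f ω).re * (g ω).im) = (∫ ω, (f ω).re) * ∫ ω, (g ω).im :=
    hri.integral_fun_mul_eq_mul_integral ifr.aestronglyMeasurable igi.aestronglyMeasurable
  have m4 : (∫ ω, (f ω).im * (g ω).re) = (∫ ω, (f ω).im) * ∫ ω, (g ω).re :=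
    hir.integral_fun_mul_eq_mul_integral ifi.aestronglyMeasurable igr.aestronglyMeasurable
  have irr : Integrable (fun ω => (f ω).re * (g ω).re) ℙ := hrr.integrable_mul ifr igr
  have iii : Integrable (fun ω => (f ω).im * (g ω).im) ℙ := hii.integrable_mul ifi igi
  have iri : Integrable (fun ω => (f ω).re * (g ω).im) ℙ := hri.integrable_mul ifr igi
  have iir : Integrable (fun ω => (f ω).im * (g ω).re) ℙ := hir.integrable_mul ifi igr
  apply Complex.ext
  · have e1 : (∫ ω, f ω * g ω).re = ∫ ω, (f ω * g ω).re := (integral_re hfg).symm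
    rw [e1]
    have e2 : ∀ ω, (f ω * g ω).re = (f ω).re * (g ω).re - (f ω).im * (g ω).im :=
      fun ω => Complex.mul_re _ _
    have nfr : (∫ ω, (f ω).re) = (∫ ω, f ω).re := integral_re hf
    have nfi : (∫ ω, (f ω).im) = (∫ ω, f ω).im := integral_im hf
    have ngr : (∫ ω, (g ω).re) = (∫ ω, g ω).re := integral_re hg
    have ngi : (∫ ω, (g ω).im) = (∫ ω, g ω).im := integral_im hg
    rw [integral_congr_ae (Filter.Eventually.of_forall e2), integral_sub irr iii, m1, m2,
      Complex.mul_re, nfr, nfi, ngr, ngi]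
  · have e1 : (∫ ω, f ω * g ω).im = ∫ ω, (f ω * g ω).im := (integral_im hfg).symm
    rw [e1]
    have e2 : ∀ ω, (f ω * g ω).im = (f ω).re * (g ω).im + (f ω).im * (g ω).re :=
      fun ω => Complex.mul_im _ _
    have nfr : (∫ ω, (f ω).re) = (∫ ω, f ω).re := integral_re hf
    have nfi : (∫ ω, (f ω).im) = (∫ ω, f ω).im := integral_im hf
    have ngr : (∫ ω, (g ω).re) = (∫ ω, g ω).re := integral_re hg
    have ngi : (∫ ω, (g ω).im) = (∫ ω, g ω).im := integral_im hg
    rw [integral_congr_ae (Filter.Eventually.of_forall e2), integral_add iri iir, m3, m4,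
      Complex.mul_im, nfr, nfi, ngr, ngi]

private lemma aux_cov_mulVec {N : ℕ} {u v : Ω → Fin N → ℂ} (P R S : Matrix (Fin N) (Fin N) ℂ)
    (hI : ∀ l m, Integrable (fun ω => u ω l * starRingEnd ℂ (v ω m)) ℙ)
    (hE : ∀ l m, (∫ ω, u ω l * starRingEnd ℂ (v ω m)) = S l m) (i j : Fin N) :
    Integrable (fun ω => (P *ᵥ u ω) i * starRingEnd ℂ ((R *ᵥ v ω) j)) ℙ ∧
      (∫ ω, (P *ᵥ u ω) i * starRingEnd ℂ ((R *ᵥ v ω) j)) = (P * S * Rᴴ) i j := by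
  have key : ∀ ω, (P *ᵥ u ω) i * starRingEnd ℂ ((R *ᵥ v ω) j)
      = ∑ l, ∑ m, (P i l * starRingEnd ℂ (R j m)) * (u ω l * starRingEnd ℂ (v ω m)) := by
    intro ω
    simp only [mulVec, dotProduct, _root_.map_sum, _root_.map_mul, Finset.sum_mul_sum]
    exact Finset.sum_congr rfl fun l _ => Finset.sum_congr rfl fun m _ => by ring
  constructor
  · refine Integrable.congr ?_ (Filter.Eventually.of_forall fun ω => (key ω).symm)
    exact integrable_finset_sum _ fun l _ =>
      integrable_finset_sum _ fun m _ => (hI l m).const_mul _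
  · rw [integral_congr_ae (Filter.Eventually.of_forall key),
      integral_finset_sum _ (fun l _ => integrable_finset_sum _ fun m _ => (hI l m).const_mul _)]
    have step : ∀ l : Fin N,
        (∫ ω, ∑ m, (P i l * starRingEnd ℂ (R j m)) * (u ω l * starRingEnd ℂ (v ω m)))
          = ∑ m, (P i l * starRingEnd ℂ (R j m)) * S l m := by
      intro l
      rw [integral_finset_sum _ (fun m _ => (hI l m).const_mul _)]
      refine Finset.sum_congr rfl fun m _ => ?_
      rw [integral_const_mul, hE l m]
    simp only [step]
    simp only [Matrix.mul_apply, conjTranspose_apply, Finset.sum_mul, starRingEnd_apply]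
    rw [Finset.sum_comm]
    exact Finset.sum_congr rfl fun m _ => Finset.sum_congr rfl fun l _ => by ring

end AuxLemmas

/-- LMMSE error covariance for the Doppler uncertainty channel
`y = (F + s G) x + z` with mutually independent zero-mean `x, s, z`,
`E[x xᴴ] = Q ≻ 0`, `E[|s|²] = σ²`, `E[z zᴴ] = I`.  With
`R₀ = I + σ² G Q Gᴴ` and LMMSE matrix `A = Q Fᴴ (F Q Fᴴ + R₀)⁻¹`, the error
covariance is `E[(x - A y)(x - A y)ᴴ] = (Q⁻¹ + Fᴴ R₀⁻¹ F)⁻¹`. -/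
theorem stmt_5 {Ω : Type*} [MeasureSpace Ω] [IsProbabilityMeasure (ℙ : Measure Ω)]
    (N : ℕ) (hN : 1 ≤ N) (F G Q : Matrix (Fin N) (Fin N) ℂ) (hQ : Q.PosDef)
    (σ : ℝ) (hσ : 0 ≤ σ)
    (x : Ω → Fin N → ℂ) (s : Ω → ℂ) (z : Ω → Fin N → ℂ)
    (hx2 : MemLp x 2 ℙ) (hs2 : MemLp s 2 ℙ) (hz2 : MemLp z 2 ℙ)
    -- mutual independence of (x, s, z):
    (hsz : IndepFun s z ℙ) (hx_sz : IndepFun x (fun ω => (s ω, z ω)) ℙ)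
    (hxm : (∫ ω, x ω) = 0)
    (hxc : ∀ i j, (∫ ω, x ω i * starRingEnd ℂ (x ω j)) = Q i j)
    (hsm : (∫ ω, s ω) = 0)
    (hsv : (∫ ω, Complex.normSq (s ω)) = σ ^ 2)
    (hzm : (∫ ω, z ω) = 0)
    (hzc : ∀ i j, (∫ ω, z ω i * starRingEnd ℂ (z ω j)) = (1 : Matrix (Fin N) (Fin N) ℂ) i j) :
    let y : Ω → Fin N → ℂ := fun ω => (F + s ω • G) *ᵥ x ω + z ω
    let R0 : Matrix (Fin N) (Fin N) ℂ := 1 + ((σ : ℂ) ^ 2) • (G * Q * Gᴴ)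
    let A : Matrix (Fin N) (Fin N) ℂ := Q * Fᴴ * (F * Q * Fᴴ + R0)⁻¹
    ∀ i j, (∫ ω, (x ω - A *ᵥ y ω) i * starRingEnd ℂ ((x ω - A *ᵥ y ω) j))
      = ((Q⁻¹ + Fᴴ * R0⁻¹ * F)⁻¹) i j := by
  intro y R0 A i j
  have hAdef : A = Q * Fᴴ * (F * Q * Fᴴ + R0)⁻¹ := rfl
  have hR0def : R0 = 1 + ((σ : ℂ) ^ 2) • (G * Q * Gᴴ) := rfl
  -- ===== algebra part =====
  have hR0pd : R0.PosDef := by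
    rw [hR0def]
    have hrw : ((σ : ℂ) ^ 2) • (G * Q * Gᴴ) = ((σ : ℂ) • G) * Q * (((σ : ℂ) • G)ᴴ) := by
      simp only [conjTranspose_smul, Complex.star_def, Complex.conj_ofReal,
        Matrix.smul_mul, Matrix.mul_smul, smul_smul]
      rw [pow_two]
    rw [hrw]
    exact Matrix.PosDef.add_posSemidef Matrix.PosDef.one
      (hQ.posSemidef.mul_mul_conjTranspose_same _)
  have hMpd : (F * Q * Fᴴ + R0).PosDef :=
    Matrix.PosDef.posSemidef_add (hQ.posSemidef.mul_mul_conjTranspose_same F) hR0pd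
  have hMdet : IsUnit (F * Q * Fᴴ + R0).det := (Matrix.isUnit_iff_isUnit_det _).mp hMpd.isUnit
  have hQdet : IsUnit Q.det := (Matrix.isUnit_iff_isUnit_det _).mp hQ.isUnit
  have hR0det : IsUnit R0.det := (Matrix.isUnit_iff_isUnit_det _).mp hR0pd.isUnit
  have hAH : Aᴴ = (F * Q * Fᴴ + R0)⁻¹ * (F * Q) := by
    rw [hAdef, conjTranspose_mul, conjTranspose_mul, conjTranspose_nonsing_inv,
      hMpd.isHermitian.eq, conjTranspose_conjTranspose, hQ.isHermitian.eq]
  have eAM : A * (F * Q * Fᴴ + R0) = Q * Fᴴ := by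
    rw [hAdef, Matrix.nonsing_inv_mul_cancel_right _ _ hMdet]
  have expand : (1 - A * F) * Q * (1 - A * F)ᴴ
        + (A * G) * (((σ : ℂ) ^ 2) • Q) * (A * G)ᴴ + A * 1 * Aᴴ
      = Q - A * (F * Q) - Q * Fᴴ * Aᴴ + A * (F * Q * Fᴴ + R0) * Aᴴ := by
    rw [hR0def]
    simp only [conjTranspose_sub, conjTranspose_one, conjTranspose_mul, Matrix.sub_mul,
      Matrix.mul_sub, Matrix.add_mul, Matrix.mul_add, Matrix.one_mul, Matrix.mul_one,
      Matrix.smul_mul, Matrix.mul_smul, Matrix.mul_assoc]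
    abel
  have e2 : A * (F * Q * Fᴴ + R0) * Aᴴ = Q * Fᴴ * Aᴴ := by rw [eAM]
  have key1a : (1 - A * F) * Q * (1 - A * F)ᴴ
        + (A * G) * (((σ : ℂ) ^ 2) • Q) * (A * G)ᴴ + A * 1 * Aᴴ
      = Q - A * (F * Q) := by
    rw [expand, e2]; abel
  have c1 : Q⁻¹ * (A * (F * Q)) = Fᴴ * ((F * Q * Fᴴ + R0)⁻¹ * (F * Q)) := by
    rw [hAdef]
    simp only [Matrix.mul_assoc]
    rw [Matrix.nonsing_inv_mul_cancel_left _ _ hQdet]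
  have c2 : F * (A * (F * Q)) = (F * Q * Fᴴ) * ((F * Q * Fᴴ + R0)⁻¹ * (F * Q)) := by
    rw [hAdef]; simp only [Matrix.mul_assoc]
  have hstar : (F * Q * Fᴴ) * ((F * Q * Fᴴ + R0)⁻¹ * (F * Q))
      + R0 * ((F * Q * Fᴴ + R0)⁻¹ * (F * Q)) = F * Q := by
    rw [← Matrix.add_mul, Matrix.mul_nonsing_inv_cancel_left _ _ hMdet]
  have hstar' : F * Q - (F * Q * Fᴴ) * ((F * Q * Fᴴ + R0)⁻¹ * (F * Q))
      = R0 * ((F * Q * Fᴴ + R0)⁻¹ * (F * Q)) := sub_eq_of_eq_add' hstar.symm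
  have key2 : (Q⁻¹ + Fᴴ * R0⁻¹ * F) * (Q - A * (F * Q)) = 1 := by
    calc (Q⁻¹ + Fᴴ * R0⁻¹ * F) * (Q - A * (F * Q))
        = Q⁻¹ * Q - Q⁻¹ * (A * (F * Q))
          + (Fᴴ * (R0⁻¹ * (F * Q)) - Fᴴ * (R0⁻¹ * (F * (A * (F * Q))))) := by
          simp only [Matrix.add_mul, Matrix.mul_sub, Matrix.mul_assoc]; abel
      _ = 1 - Fᴴ * ((F * Q * Fᴴ + R0)⁻¹ * (F * Q))
          + Fᴴ * (R0⁻¹ * (F * Q - (F * Q * Fᴴ) * ((F * Q * Fᴴ + R0)⁻¹ * (F * Q)))) := by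
          rw [Matrix.nonsing_inv_mul _ hQdet, c1, c2, Matrix.mul_sub, Matrix.mul_sub]
      _ = 1 - Fᴴ * ((F * Q * Fᴴ + R0)⁻¹ * (F * Q))
          + Fᴴ * ((F * Q * Fᴴ + R0)⁻¹ * (F * Q)) := by
          rw [hstar', Matrix.nonsing_inv_mul_cancel_left _ _ hR0det]
      _ = 1 := by abel
  have key1 : (1 - A * F) * Q * (1 - A * F)ᴴ
        + (A * G) * (((σ : ℂ) ^ 2) • Q) * (A * G)ᴴ + A * 1 * Aᴴ
      = (Q⁻¹ + Fᴴ * R0⁻¹ * F)⁻¹ := by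
    rw [key1a]
    exact (Matrix.inv_eq_right_inv key2).symm
  -- ===== probabilistic part =====
  have hxl : ∀ l, MemLp (fun ω => x ω l) 2 ℙ := fun l =>
    (ContinuousLinearMap.proj (R := ℂ) (φ := fun _ : Fin N => ℂ) l).comp_memLp' hx2
  have hzl : ∀ l, MemLp (fun ω => z ω l) 2 ℙ := fun l =>
    (ContinuousLinearMap.proj (R := ℂ) (φ := fun _ : Fin N => ℂ) l).comp_memLp' hz2
  have hxlC : ∀ l, MemLp (fun ω => starRingEnd ℂ (x ω l)) 2 ℙ := fun l => aux_conj_memℒp (hxl l)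
  have hzlC : ∀ l, MemLp (fun ω => starRingEnd ℂ (z ω l)) 2 ℙ := fun l => aux_conj_memℒp (hzl l)
  have hsC : MemLp (fun ω => starRingEnd ℂ (s ω)) 2 ℙ := aux_conj_memℒp hs2
  have isx : Integrable s ℙ := hs2.integrable one_le_two
  have ixv : Integrable x ℙ := hx2.integrable one_le_two
  have izv : Integrable z ℙ := hz2.integrable one_le_two
  have hxm' : ∀ l, (∫ ω, x ω l) = 0 := by
    intro l
    have h := (ContinuousLinearMap.proj (R := ℂ) (φ := fun _ : Fin N => ℂ) l).integral_comp_comm ixv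
    rw [hxm] at h
    simpa using h
  have hzm' : ∀ l, (∫ ω, z ω l) = 0 := by
    intro l
    have h := (ContinuousLinearMap.proj (R := ℂ) (φ := fun _ : Fin N => ℂ) l).integral_comp_comm izv
    rw [hzm] at h
    simpa using h
  have hxmC : ∀ l, (∫ ω, starRingEnd ℂ (x ω l)) = 0 := by
    intro l; rw [integral_conj, hxm' l, map_zero]
  -- measurability helpers
  have measxx : ∀ l m : Fin N, Measurable (fun v : Fin N → ℂ => v l * starRingEnd ℂ (v m)) :=
    fun l m => (measurable_pi_apply l).mul (Complex.continuous_conj.measurable.comp (measurable_pi_apply m))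
  -- basic moment facts
  have mXX : ∀ l m, Integrable (fun ω => x ω l * starRingEnd ℂ (x ω m)) ℙ :=
    fun l m => aux_mul_integrable (hxl l) (hxlC m)
  have mZZ : ∀ l m, Integrable (fun ω => z ω l * starRingEnd ℂ (z ω m)) ℙ :=
    fun l m => aux_mul_integrable (hzl l) (hzlC m)
  have iSS : Integrable (fun ω => s ω * starRingEnd ℂ (s ω)) ℙ := aux_mul_integrable hs2 hsC
  have eSS : (∫ ω, s ω * starRingEnd ℂ (s ω)) = (σ : ℂ) ^ 2 := by
    have e : ∀ ω, s ω * starRingEnd ℂ (s ω) = ((Complex.normSq (s ω) : ℝ) : ℂ) :=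
      fun ω => Complex.mul_conj _
    have hcast : (∫ ω, ((Complex.normSq (s ω) : ℝ) : ℂ))
        = ((∫ ω, Complex.normSq (s ω) : ℝ) : ℂ) := integral_ofReal
    rw [integral_congr_ae (Filter.Eventually.of_forall e), hcast, hsv]
    push_cast
    ring
  -- independence facts
  have ind_xx_s : ∀ l m, IndepFun (fun ω => x ω l * starRingEnd ℂ (x ω m)) s ℙ :=
    fun l m => hx_sz.comp (measxx l m) measurable_fst
  have ind_xx_cs : ∀ l m,
      IndepFun (fun ω => x ω l * starRingEnd ℂ (x ω m)) (fun ω => starRingEnd ℂ (s ω)) ℙ :=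
    fun l m => hx_sz.comp (measxx l m) (Complex.continuous_conj.measurable.comp measurable_fst)
  have ind_xx_ss : ∀ l m,
      IndepFun (fun ω => x ω l * starRingEnd ℂ (x ω m))
        (fun ω => s ω * starRingEnd ℂ (s ω)) ℙ :=
    fun l m => hx_sz.comp (measxx l m) (measurable_fst.mul (Complex.continuous_conj.measurable.comp measurable_fst))
  have ind_x_cz : ∀ l m,
      IndepFun (fun ω => x ω l) (fun ω => starRingEnd ℂ (z ω m)) ℙ :=
    fun l m => hx_sz.comp (measurable_pi_apply l)
      (Complex.continuous_conj.measurable.comp ((measurable_pi_apply m).comp measurable_snd))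
  have ind_cx_z : ∀ l m,
      IndepFun (fun ω => starRingEnd ℂ (x ω m)) (fun ω => z ω l) ℙ :=
    fun l m => hx_sz.comp (Complex.continuous_conj.measurable.comp (measurable_pi_apply m))
      ((measurable_pi_apply l).comp measurable_snd)
  have ind_x_scz : ∀ l m,
      IndepFun (fun ω => x ω l) (fun ω => s ω * starRingEnd ℂ (z ω m)) ℙ :=
    fun l m => hx_sz.comp (measurable_pi_apply l)
      (measurable_fst.mul (Complex.continuous_conj.measurable.comp ((measurable_pi_apply m).comp measurable_snd)))
  have ind_cx_csz : ∀ l m,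
      IndepFun (fun ω => starRingEnd ℂ (x ω m))
        (fun ω => starRingEnd ℂ (s ω) * z ω l) ℙ :=
    fun l m => hx_sz.comp (Complex.continuous_conj.measurable.comp (measurable_pi_apply m))
      ((Complex.continuous_conj.measurable.comp measurable_fst).mul ((measurable_pi_apply l).comp measurable_snd))
  -- integrability of mixed moments
  have iSXX : ∀ l m, Integrable (fun ω => (s ω * x ω l) * starRingEnd ℂ (x ω m)) ℙ := by
    intro l m
    have h := (ind_xx_s l m).integrable_mul (mXX l m) isx
    exact h.congr (Filter.Eventually.of_forall fun ω => by simp only [Pi.mul_apply]; ring)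
  have iXcSX : ∀ l m, Integrable (fun ω => x ω l * starRingEnd ℂ (s ω * x ω m)) ℙ := by
    intro l m
    have h := (ind_xx_cs l m).integrable_mul (mXX l m) (hsC.integrable one_le_two)
    exact h.congr (Filter.Eventually.of_forall fun ω => by
      simp only [Pi.mul_apply, _root_.map_mul]; ring)
  have iSXcSX : ∀ l m, Integrable (fun ω => (s ω * x ω l) * starRingEnd ℂ (s ω * x ω m)) ℙ := by
    intro l m
    have h := (ind_xx_ss l m).integrable_mul (mXX l m) iSS
    exact h.congr (Filter.Eventually.of_forall fun ω => by
      simp only [Pi.mul_apply, _root_.map_mul]; ring)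
  have iXcZ : ∀ l m, Integrable (fun ω => x ω l * starRingEnd ℂ (z ω m)) ℙ :=
    fun l m => aux_mul_integrable (hxl l) (hzlC m)
  have iZcX : ∀ l m, Integrable (fun ω => z ω l * starRingEnd ℂ (x ω m)) ℙ :=
    fun l m => aux_mul_integrable (hzl l) (hxlC m)
  have iSXcZ : ∀ l m, Integrable (fun ω => (s ω * x ω l) * starRingEnd ℂ (z ω m)) ℙ := by
    intro l m
    have h := (ind_x_scz l m).integrable_mul ((hxl l).integrable one_le_two)
      (aux_mul_integrable hs2 (hzlC m))
    exact h.congr (Filter.Eventually.of_forall fun ω => by simp only [Pi.mul_apply]; ring)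
  have iZcSX : ∀ l m, Integrable (fun ω => z ω l * starRingEnd ℂ (s ω * x ω m)) ℙ := by
    intro l m
    have h := (ind_cx_csz l m).integrable_mul ((hxlC m).integrable one_le_two)
      (aux_mul_integrable hsC (hzl l))
    exact h.congr (Filter.Eventually.of_forall fun ω => by
      simp only [Pi.mul_apply, _root_.map_mul]; ring)
  -- expectation values of mixed moments
  have Z0 : ∀ l m : Fin N, (0 : Matrix (Fin N) (Fin N) ℂ) l m = 0 := fun l m => rfl
  have eSXX : ∀ l m, (∫ ω, (s ω * x ω l) * starRingEnd ℂ (x ω m))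
      = (0 : Matrix (Fin N) (Fin N) ℂ) l m := by
    intro l m
    rw [Z0]
    have e : ∀ ω, (s ω * x ω l) * starRingEnd ℂ (x ω m)
        = (x ω l * starRingEnd ℂ (x ω m)) * s ω := fun ω => by ring
    rw [integral_congr_ae (Filter.Eventually.of_forall e),
      aux_indep_integral_mul (ind_xx_s l m) (mXX l m) isx, hsm, mul_zero]
  have eXcSX : ∀ l m, (∫ ω, x ω l * starRingEnd ℂ (s ω * x ω m))
      = (0 : Matrix (Fin N) (Fin N) ℂ) l m := by
    intro l m
    rw [Z0]
    have e : ∀ ω, x ω l * starRingEnd ℂ (s ω * x ω m)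
        = (x ω l * starRingEnd ℂ (x ω m)) * starRingEnd ℂ (s ω) := fun ω => by
      simp only [_root_.map_mul]; ring
    rw [integral_congr_ae (Filter.Eventually.of_forall e),
      aux_indep_integral_mul (ind_xx_cs l m) (mXX l m) (hsC.integrable one_le_two)]
    have : (∫ ω, starRingEnd ℂ (s ω)) = 0 := by rw [integral_conj, hsm, map_zero]
    rw [this, mul_zero]
  have eSXcSX : ∀ l m, (∫ ω, (s ω * x ω l) * starRingEnd ℂ (s ω * x ω m))
      = ((((σ : ℂ) ^ 2) • Q) : Matrix (Fin N) (Fin N) ℂ) l m := by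
    intro l m
    have e : ∀ ω, (s ω * x ω l) * starRingEnd ℂ (s ω * x ω m)
        = (x ω l * starRingEnd ℂ (x ω m)) * (s ω * starRingEnd ℂ (s ω)) := fun ω => by
      simp only [_root_.map_mul]; ring
    rw [integral_congr_ae (Filter.Eventually.of_forall e),
      aux_indep_integral_mul (ind_xx_ss l m) (mXX l m) iSS, hxc l m, eSS,
      Matrix.smul_apply, smul_eq_mul, mul_comm]
  have eXcZ : ∀ l m, (∫ ω, x ω l * starRingEnd ℂ (z ω m))
      = (0 : Matrix (Fin N) (Fin N) ℂ) l m := by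
    intro l m
    rw [Z0, aux_indep_integral_mul (ind_x_cz l m) ((hxl l).integrable one_le_two)
      ((hzlC m).integrable one_le_two), hxm' l, zero_mul]
  have eZcX : ∀ l m, (∫ ω, z ω l * starRingEnd ℂ (x ω m))
      = (0 : Matrix (Fin N) (Fin N) ℂ) l m := by
    intro l m
    rw [Z0]
    have e : ∀ ω, z ω l * starRingEnd ℂ (x ω m)
        = starRingEnd ℂ (x ω m) * z ω l := fun ω => by ring
    rw [integral_congr_ae (Filter.Eventually.of_forall e),
      aux_indep_integral_mul (ind_cx_z l m) ((hxlC m).integrable one_le_two)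
        ((hzl l).integrable one_le_two), hxmC m, zero_mul]
  have eSXcZ : ∀ l m, (∫ ω, (s ω * x ω l) * starRingEnd ℂ (z ω m))
      = (0 : Matrix (Fin N) (Fin N) ℂ) l m := by
    intro l m
    rw [Z0]
    have e : ∀ ω, (s ω * x ω l) * starRingEnd ℂ (z ω m)
        = x ω l * (s ω * starRingEnd ℂ (z ω m)) := fun ω => by ring
    rw [integral_congr_ae (Filter.Eventually.of_forall e),
      aux_indep_integral_mul (ind_x_scz l m) ((hxl l).integrable one_le_two)
        (aux_mul_integrable hs2 (hzlC m)), hxm' l, zero_mul]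
  have eZcSX : ∀ l m, (∫ ω, z ω l * starRingEnd ℂ (s ω * x ω m))
      = (0 : Matrix (Fin N) (Fin N) ℂ) l m := by
    intro l m
    rw [Z0]
    have e : ∀ ω, z ω l * starRingEnd ℂ (s ω * x ω m)
        = starRingEnd ℂ (x ω m) * (starRingEnd ℂ (s ω) * z ω l) := fun ω => by
      simp only [_root_.map_mul]; ring
    rw [integral_congr_ae (Filter.Eventually.of_forall e),
      aux_indep_integral_mul (ind_cx_csz l m) ((hxlC m).integrable one_le_two)
        (aux_mul_integrable hsC (hzl l)), hxmC m, zero_mul]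
  -- instantiate the covariance helper
  have iXcSX' : ∀ l m, Integrable (fun ω => x ω l * starRingEnd ℂ ((s ω • x ω) m)) ℙ := iXcSX
  have iSXX' : ∀ l m, Integrable (fun ω => (s ω • x ω) l * starRingEnd ℂ (x ω m)) ℙ := iSXX
  have iSXcSX' : ∀ l m,
      Integrable (fun ω => (s ω • x ω) l * starRingEnd ℂ ((s ω • x ω) m)) ℙ := iSXcSX
  have iSXcZ' : ∀ l m, Integrable (fun ω => (s ω • x ω) l * starRingEnd ℂ (z ω m)) ℙ := iSXcZ
  have iZcSX' : ∀ l m, Integrable (fun ω => z ω l * starRingEnd ℂ ((s ω • x ω) m)) ℙ := iZcSX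
  have eXcSX' : ∀ l m, (∫ ω, x ω l * starRingEnd ℂ ((s ω • x ω) m))
      = (0 : Matrix (Fin N) (Fin N) ℂ) l m := eXcSX
  have eSXX' : ∀ l m, (∫ ω, (s ω • x ω) l * starRingEnd ℂ (x ω m))
      = (0 : Matrix (Fin N) (Fin N) ℂ) l m := eSXX
  have eSXcSX' : ∀ l m, (∫ ω, (s ω • x ω) l * starRingEnd ℂ ((s ω • x ω) m))
      = ((((σ : ℂ) ^ 2) • Q) : Matrix (Fin N) (Fin N) ℂ) l m := eSXcSX
  have eSXcZ' : ∀ l m, (∫ ω, (s ω • x ω) l * starRingEnd ℂ (z ω m))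
      = (0 : Matrix (Fin N) (Fin N) ℂ) l m := eSXcZ
  have eZcSX' : ∀ l m, (∫ ω, z ω l * starRingEnd ℂ ((s ω • x ω) m))
      = (0 : Matrix (Fin N) (Fin N) ℂ) l m := eZcSX
  have H1 := aux_cov_mulVec (u := x) (v := x) (1 - A * F) (1 - A * F) Q mXX hxc i j
  have H2 := aux_cov_mulVec (u := x) (v := fun ω => s ω • x ω) (1 - A * F) (A * G) 0
    iXcSX' eXcSX' i j
  have H3 := aux_cov_mulVec (u := x) (v := z) (1 - A * F) A 0 iXcZ eXcZ i j
  have H4 := aux_cov_mulVec (u := fun ω => s ω • x ω) (v := x) (A * G) (1 - A * F) 0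
    iSXX' eSXX' i j
  have H5 := aux_cov_mulVec (u := fun ω => s ω • x ω) (v := fun ω => s ω • x ω) (A * G) (A * G)
    (((σ : ℂ) ^ 2) • Q) iSXcSX' eSXcSX' i j
  have H6 := aux_cov_mulVec (u := fun ω => s ω • x ω) (v := z) (A * G) A 0 iSXcZ' eSXcZ' i j
  have H7 := aux_cov_mulVec (u := z) (v := x) A (1 - A * F) 0 iZcX eZcX i j
  have H8 := aux_cov_mulVec (u := z) (v := fun ω => s ω • x ω) A (A * G) 0 iZcSX' eZcSX' i j
  have H9 := aux_cov_mulVec (u := z) (v := z) A A 1 mZZ hzc i j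
  -- decomposition of the error
  have hdec : ∀ ω, x ω - A *ᵥ y ω
      = ((1 - A * F) *ᵥ x ω) - ((A * G) *ᵥ (s ω • x ω)) - (A *ᵥ z ω) := by
    intro ω
    show x ω - A *ᵥ ((F + s ω • G) *ᵥ x ω + z ω) = _
    rw [mulVec_add, mulVec_mulVec, Matrix.mul_add, Matrix.mul_smul, add_mulVec,
      smul_mulVec, sub_mulVec, one_mulVec, mulVec_smul]
    abel
  have intgd : ∀ ω, (x ω - A *ᵥ y ω) i * starRingEnd ℂ ((x ω - A *ᵥ y ω) j)
      = ((1 - A * F) *ᵥ x ω) i * starRingEnd ℂ (((1 - A * F) *ᵥ x ω) j)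
        - ((1 - A * F) *ᵥ x ω) i * starRingEnd ℂ (((A * G) *ᵥ (s ω • x ω)) j)
        - ((1 - A * F) *ᵥ x ω) i * starRingEnd ℂ ((A *ᵥ z ω) j)
        - ((A * G) *ᵥ (s ω • x ω)) i * starRingEnd ℂ (((1 - A * F) *ᵥ x ω) j)
        + ((A * G) *ᵥ (s ω • x ω)) i * starRingEnd ℂ (((A * G) *ᵥ (s ω • x ω)) j)
        + ((A * G) *ᵥ (s ω • x ω)) i * starRingEnd ℂ ((A *ᵥ z ω) j)
        - (A *ᵥ z ω) i * starRingEnd ℂ (((1 - A * F) *ᵥ x ω) j)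
        + (A *ᵥ z ω) i * starRingEnd ℂ (((A * G) *ᵥ (s ω • x ω)) j)
        + (A *ᵥ z ω) i * starRingEnd ℂ ((A *ᵥ z ω) j) := by
    intro ω
    rw [hdec ω]
    simp only [Pi.sub_apply, _root_.map_sub]
    ring
  -- combined integrability for splitting the integral
  have c12 : Integrable (fun ω =>
      ((1 - A * F) *ᵥ x ω) i * starRingEnd ℂ (((1 - A * F) *ᵥ x ω) j)
      - ((1 - A * F) *ᵥ x ω) i * starRingEnd ℂ (((A * G) *ᵥ (s ω • x ω)) j)) ℙ :=
    H1.1.sub H2.1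
  have c13 : Integrable (fun ω =>
      ((1 - A * F) *ᵥ x ω) i * starRingEnd ℂ (((1 - A * F) *ᵥ x ω) j)
      - ((1 - A * F) *ᵥ x ω) i * starRingEnd ℂ (((A * G) *ᵥ (s ω • x ω)) j)
      - ((1 - A * F) *ᵥ x ω) i * starRingEnd ℂ ((A *ᵥ z ω) j)) ℙ := c12.sub H3.1
  have c14 : Integrable (fun ω =>
      ((1 - A * F) *ᵥ x ω) i * starRingEnd ℂ (((1 - A * F) *ᵥ x ω) j)
      - ((1 - A * F) *ᵥ x ω) i * starRingEnd ℂ (((A * G) *ᵥ (s ω • x ω)) j)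
      - ((1 - A * F) *ᵥ x ω) i * starRingEnd ℂ ((A *ᵥ z ω) j)
      - ((A * G) *ᵥ (s ω • x ω)) i * starRingEnd ℂ (((1 - A * F) *ᵥ x ω) j)) ℙ := c13.sub H4.1
  have c15 : Integrable (fun ω =>
      ((1 - A * F) *ᵥ x ω) i * starRingEnd ℂ (((1 - A * F) *ᵥ x ω) j)
      - ((1 - A * F) *ᵥ x ω) i * starRingEnd ℂ (((A * G) *ᵥ (s ω • x ω)) j)
      - ((1 - A * F) *ᵥ x ω) i * starRingEnd ℂ ((A *ᵥ z ω) j)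
      - ((A * G) *ᵥ (s ω • x ω)) i * starRingEnd ℂ (((1 - A * F) *ᵥ x ω) j)
      + ((A * G) *ᵥ (s ω • x ω)) i * starRingEnd ℂ (((A * G) *ᵥ (s ω • x ω)) j)) ℙ :=
    c14.add H5.1
  have c16 : Integrable (fun ω =>
      ((1 - A * F) *ᵥ x ω) i * starRingEnd ℂ (((1 - A * F) *ᵥ x ω) j)
      - ((1 - A * F) *ᵥ x ω) i * starRingEnd ℂ (((A * G) *ᵥ (s ω • x ω)) j)
      - ((1 - A * F) *ᵥ x ω) i * starRingEnd ℂ ((A *ᵥ z ω) j)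
      - ((A * G) *ᵥ (s ω • x ω)) i * starRingEnd ℂ (((1 - A * F) *ᵥ x ω) j)
      + ((A * G) *ᵥ (s ω • x ω)) i * starRingEnd ℂ (((A * G) *ᵥ (s ω • x ω)) j)
      + ((A * G) *ᵥ (s ω • x ω)) i * starRingEnd ℂ ((A *ᵥ z ω) j)) ℙ := c15.add H6.1
  have c17 : Integrable (fun ω =>
      ((1 - A * F) *ᵥ x ω) i * starRingEnd ℂ (((1 - A * F) *ᵥ x ω) j)
      - ((1 - A * F) *ᵥ x ω) i * starRingEnd ℂ (((A * G) *ᵥ (s ω • x ω)) j)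
      - ((1 - A * F) *ᵥ x ω) i * starRingEnd ℂ ((A *ᵥ z ω) j)
      - ((A * G) *ᵥ (s ω • x ω)) i * starRingEnd ℂ (((1 - A * F) *ᵥ x ω) j)
      + ((A * G) *ᵥ (s ω • x ω)) i * starRingEnd ℂ (((A * G) *ᵥ (s ω • x ω)) j)
      + ((A * G) *ᵥ (s ω • x ω)) i * starRingEnd ℂ ((A *ᵥ z ω) j)
      - (A *ᵥ z ω) i * starRingEnd ℂ (((1 - A * F) *ᵥ x ω) j)) ℙ := c16.sub H7.1
  have c18 : Integrable (fun ω =>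
      ((1 - A * F) *ᵥ x ω) i * starRingEnd ℂ (((1 - A * F) *ᵥ x ω) j)
      - ((1 - A * F) *ᵥ x ω) i * starRingEnd ℂ (((A * G) *ᵥ (s ω • x ω)) j)
      - ((1 - A * F) *ᵥ x ω) i * starRingEnd ℂ ((A *ᵥ z ω) j)
      - ((A * G) *ᵥ (s ω • x ω)) i * starRingEnd ℂ (((1 - A * F) *ᵥ x ω) j)
      + ((A * G) *ᵥ (s ω • x ω)) i * starRingEnd ℂ (((A * G) *ᵥ (s ω • x ω)) j)
      + ((A * G) *ᵥ (s ω • x ω)) i * starRingEnd ℂ ((A *ᵥ z ω) j)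
      - (A *ᵥ z ω) i * starRingEnd ℂ (((1 - A * F) *ᵥ x ω) j)
      + (A *ᵥ z ω) i * starRingEnd ℂ (((A * G) *ᵥ (s ω • x ω)) j)) ℙ := c17.add H8.1
  -- split the integral and conclude
  rw [integral_congr_ae (Filter.Eventually.of_forall intgd),
    integral_add c18 H9.1, integral_add c17 H8.1, integral_sub c16 H7.1,
    integral_add c15 H6.1, integral_add c14 H5.1, integral_sub c13 H4.1,
    integral_sub c12 H3.1, integral_sub H1.1 H2.1,
    H1.2, H2.2, H3.2, H4.2, H5.2, H6.2, H7.2, H8.2, H9.2]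
  simp only [Matrix.mul_zero, Matrix.zero_mul, Matrix.zero_apply, sub_zero, add_zero]
  rw [← Matrix.add_apply, ← Matrix.add_apply, key1]
end
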